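/- Set θ' = 5(3 + 2√2) and μ_n = 2θ'·4^{−(n+1)} for n ∈ ℕ with n ≥ 1, and let (X_{μ_n}, Y_{μ_n}) be the unique solutions of μ_n X + B₁(X,Y) = 0, μ_n Y + B₂(X,Y) = 0. Then liminf_{n→∞} X_{μ_n} > 1/√2 and liminf_{n→∞} Y_{μ_n} > −1/√2. -/

import Mathlib

open Real Filter Topology

/-- The 2×2 matrix C(α,β) from the paper. -/
noncomputable def Cmat (a b : ℝ) : Matrix (Fin 2) (Fin 2) ℝ :=
  1 + b • !![-a, -1 + a; -1 + a, -a] + (1 - b) • !![-1 + a, -a; -a, -1 + a]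

/-- The running costs L₁, L₂. -/
noncomputable def Lfun (i : Fin 2) (a b : ℝ) : ℝ :=
  if i = 0 then a * b + 2 * (1 - a) * (1 - b) else -(a * b) - 2 * (1 - a) * (1 - b)

/-- b_i(α,β,u₁,u₂) = c_{i1}(α,β)u₁ + c_{i2}(α,β)u₂ − L_i(α,β). -/
noncomputable def bfun (i : Fin 2) (a b u₁ u₂ : ℝ) : ℝ :=
  Cmat a b i 0 * u₁ + Cmat a b i 1 * u₂ - Lfun i a b

/-- A_i(u₁,u₂) = max_{α∈𝒜} min_{β∈ℬ} b_i(α,β,u₁,u₂). -/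
noncomputable def Afun (As Bs : Set ℝ) (i : Fin 2) (u₁ u₂ : ℝ) : ℝ :=
  sSup ((fun a => sInf ((fun b => bfun i a b u₁ u₂) '' Bs)) '' As)

/-- The set 𝒜 = {2 − √2 + 4^{−k} : k ≥ 1} ∪ {2 − √2}. -/
noncomputable def calA : Set ℝ :=
  {x | ∃ k : ℕ, 1 ≤ k ∧ x = 2 - Real.sqrt 2 + (4 : ℝ) ^ (-(k : ℤ))} ∪ {2 - Real.sqrt 2}

/-- The set ℬ = {0, 1}. -/
def calB : Set ℝ := {0, 1}

/-- B_i(u₁,u₂) = max_{α∈𝒜} min_{β∈ℬ} b_i(α,β,u₁,u₂). -/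
noncomputable def Bop (i : Fin 2) (u₁ u₂ : ℝ) : ℝ := Afun calA calB i u₁ u₂

/-!
Both `b₁` and `b₂ = -b₁` depend on `u` only through `s = u₁ - u₂`, through the two branches
`ψ₀ α s` (`β = 0`) and `ψ₁ α s` (`β = 1`). Hence `Bop 0 = B₀ s` and `Bop 1 = B₁ s`, with `B₀`
monotone and `B₁` antitone in `s`, and subtracting the two equations shows that `s = X_λ - Y_λ` is
the zero of the strictly increasing residual `σ ↦ λσ + B₀ σ - B₁ σ`.

The branches cross at `α = (s + 2) / (2s + 3)`, which is `2 - √2` for `s = √2`. For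
`s = √2 - t·4^{-(n+1)}` with `84 ≤ t ≤ 86` the crossing lies in the gap
`(2 - √2 + 4^{-(n+1)}, 2 - √2 + 4^{-n})` of `𝒜`, so the outer maxima are attained at the two ends
of the gap and `B₀`, `B₁` become explicit. For `λ = μ_n` the residual changes sign between `t = 86`
and `t = 84` (its linearised zero is `t = 85/2 + 30√2 ≈ 84.93`), which traps `s`; monotonicity then
gives `X_{μ_n} ∈ [3/4, 1]` and `Y_{μ_n} ∈ [-2/3, 0]` for `n ≥ 6`, and `3/4 > 1/√2 > 2/3`.
-/

open Set

theorem isGreatest_image_min_of_gap {α β : Type*} [LinearOrder α] [LinearOrder β] {A : Set α}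
    {u v : α → β} (hu : Monotone u) (hv : Antitone v) {a b : α} (ha : a ∈ A) (hb : b ∈ A)
    (hgap : ∀ c ∈ A, c ≤ a ∨ b ≤ c) (hua : u a ≤ v a) (hvb : v b ≤ u b) :
    IsGreatest ((fun c => min (u c) (v c)) '' A) (max (u a) (v b)) := by
  refine ⟨?_, ?_⟩
  · rcases le_total (v b) (u a) with h | h
    · exact ⟨a, ha, by dsimp only; rw [min_eq_left hua, max_eq_left h]⟩
    · exact ⟨b, hb, by dsimp only; rw [min_eq_right hvb, max_eq_right h]⟩
  · rintro _ ⟨c, hc, rfl⟩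
    rcases hgap c hc with h | h
    · exact le_max_of_le_left ((min_le_left _ _).trans (hu h))
    · exact le_max_of_le_right ((min_le_right _ _).trans (hv h))

theorem csSup_image_le_csSup_image {α β : Type*} [ConditionallyCompleteLattice β] {A : Set α}
    (hA : A.Nonempty) {φ χ : α → β} (h : ∀ a ∈ A, φ a ≤ χ a) (hχ : BddAbove (χ '' A)) :
    sSup (φ '' A) ≤ sSup (χ '' A) :=
  csSup_le (hA.image φ) <| by
    rintro _ ⟨a, ha, rfl⟩
    exact le_csSup_of_le hχ ⟨a, ha, rfl⟩ (h a ha)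

theorem le_liminf_of_eventually_mem_Icc {ι α : Type*} [ConditionallyCompleteLattice α]
    {l : Filter ι} [l.NeBot] {u : ι → α} {a b : α} (h : ∀ᶠ i in l, u i ∈ Icc a b) :
    a ≤ liminf u l :=
  le_liminf_of_le (isCoboundedUnder_ge_of_eventually_le l (h.mono fun _ hi => hi.2))
    (h.mono fun _ hi => hi.1)

lemma sqrt_two_mem_Icc : √2 ∈ Icc 1.4142 1.4143 := by
  have h := Real.sq_sqrt (show (0 : ℝ) ≤ 2 by norm_num)
  have h₀ := Real.sqrt_nonneg 2
  constructor <;> nlinarith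

lemma inv_sqrt_two_mem_Ioo : 1 / √2 ∈ Ioo (2 / 3) (3 / 4) := by
  obtain ⟨h, h'⟩ := sqrt_two_mem_Icc
  constructor
  · rw [lt_div_iff₀ (by positivity)]; linarith
  · rw [div_lt_iff₀ (by positivity)]; linarith

def ψ₀ (a s : ℝ) : ℝ := a * (s + 2) - 2

def ψ₁ (a s : ℝ) : ℝ := s - a * (s + 1)

lemma bfun_zero_eq (a b u₁ u₂ : ℝ) :
    bfun 0 a b u₁ u₂ = (a + b - 2 * a * b) * (u₁ - u₂) - (a * b + 2 * (1 - a) * (1 - b)) := by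
  simp only [bfun, Cmat, Lfun, Matrix.add_apply, Matrix.smul_apply, Matrix.one_apply,
    Matrix.of_apply, Matrix.cons_val', Matrix.cons_val_zero, Matrix.cons_val_one,
    Matrix.cons_val_fin_one, smul_eq_mul, zero_ne_one, if_true, if_false]
  ring

lemma bfun_one_eq_neg (a b u₁ u₂ : ℝ) : bfun 1 a b u₁ u₂ = -bfun 0 a b u₁ u₂ := by
  simp only [bfun, Cmat, Lfun, Matrix.add_apply, Matrix.smul_apply, Matrix.one_apply,
    Matrix.of_apply, Matrix.cons_val', Matrix.cons_val_zero, Matrix.cons_val_one,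
    Matrix.cons_val_fin_one, smul_eq_mul, zero_ne_one, one_ne_zero, if_true, if_false]
  ring

lemma bfun_zero_zero (a u₁ u₂ : ℝ) : bfun 0 a 0 u₁ u₂ = ψ₀ a (u₁ - u₂) := by
  rw [bfun_zero_eq, ψ₀]; ring

lemma bfun_zero_one (a u₁ u₂ : ℝ) : bfun 0 a 1 u₁ u₂ = ψ₁ a (u₁ - u₂) := by
  rw [bfun_zero_eq, ψ₁]; ring

lemma monotone_ψ₀ {a : ℝ} (ha : 0 ≤ a) : Monotone (ψ₀ a) := fun s t hst => by
  unfold ψ₀; nlinarith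

lemma monotone_ψ₁ {a : ℝ} (ha : a ≤ 1) : Monotone (ψ₁ a) := fun s t hst => by
  unfold ψ₁; nlinarith

lemma monotone_flip_ψ₀ {s : ℝ} (hs : -2 ≤ s) : Monotone (flip ψ₀ s) := fun a b hab => by
  unfold flip ψ₀; nlinarith

lemma antitone_flip_ψ₁ {s : ℝ} (hs : -1 ≤ s) : Antitone (flip ψ₁ s) := fun a b hab => by
  unfold flip ψ₁; nlinarith

noncomputable def B₀ (s : ℝ) : ℝ := sSup ((fun a => min (ψ₀ a s) (ψ₁ a s)) '' calA)

noncomputable def B₁ (s : ℝ) : ℝ := sSup ((fun a => min (-ψ₁ a s) (-ψ₀ a s)) '' calA)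

lemma Bop_zero_eq (u₁ u₂ : ℝ) : Bop 0 u₁ u₂ = B₀ (u₁ - u₂) := by
  refine congrArg sSup (image_congr fun a _ => ?_)
  rw [calB, image_pair, csInf_pair, bfun_zero_zero, bfun_zero_one]

lemma Bop_one_eq (u₁ u₂ : ℝ) : Bop 1 u₁ u₂ = B₁ (u₁ - u₂) := by
  refine congrArg sSup (image_congr fun a _ => ?_)
  rw [calB, image_pair, csInf_pair, bfun_one_eq_neg, bfun_one_eq_neg, bfun_zero_zero,
    bfun_zero_one, min_comm]

noncomputable def δ (n : ℕ) : ℝ := (4 : ℝ) ^ (-((n : ℤ) + 1))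

noncomputable def μ (n : ℕ) : ℝ := 2 * (5 * (3 + 2 * √2)) * δ n

lemma δ_pos (n : ℕ) : 0 < δ n := zpow_pos (by norm_num) _

lemma δ_le {n : ℕ} (hn : 6 ≤ n) : δ n ≤ 1 / 16384 := by
  have : δ n ≤ (4 : ℝ) ^ (-7 : ℤ) := zpow_le_zpow_right₀ (by norm_num) (by omega)
  norm_num at this ⊢
  exact this

lemma μ_pos (n : ℕ) : 0 < μ n := by
  have := δ_pos n
  unfold μ; positivity

lemma four_mul_δ (n : ℕ) : 4 * δ n = (4 : ℝ) ^ (-(n : ℤ)) := by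
  rw [δ, neg_add, zpow_add₀ (by norm_num), zpow_neg_one]; ring

lemma calA_nonempty : calA.Nonempty := ⟨2 - √2, Or.inr rfl⟩

lemma calA_subset_Icc : calA ⊆ Icc 0 1 := by
  obtain ⟨h, h'⟩ := sqrt_two_mem_Icc
  rintro _ (⟨k, hk, rfl⟩ | rfl)
  · have h₀ : (0 : ℝ) < 4 ^ (-(k : ℤ)) := zpow_pos (by norm_num) _
    have h₁ : (4 : ℝ) ^ (-(k : ℤ)) ≤ 4 ^ (-1 : ℤ) := zpow_le_zpow_right₀ (by norm_num) (by omega)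
    rw [zpow_neg_one] at h₁
    constructor <;> linarith
  · constructor <;> linarith

lemma self_add_δ_mem_calA (n : ℕ) : 2 - √2 + δ n ∈ calA :=
  Or.inl ⟨n + 1, by omega, by simp [δ]⟩

lemma self_add_four_mul_δ_mem_calA {n : ℕ} (hn : 1 ≤ n) : 2 - √2 + 4 * δ n ∈ calA :=
  Or.inl ⟨n, hn, by rw [four_mul_δ]⟩

lemma calA_gap (n : ℕ) : ∀ c ∈ calA, c ≤ 2 - √2 + δ n ∨ 2 - √2 + 4 * δ n ≤ c := by
  rintro _ (⟨k, hk, rfl⟩ | rfl)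
  · rcases le_or_gt k n with h | h
    · right
      have : (4 : ℝ) ^ (-(n : ℤ)) ≤ 4 ^ (-(k : ℤ)) := zpow_le_zpow_right₀ (by norm_num) (by omega)
      linarith [four_mul_δ n]
    · left
      have : (4 : ℝ) ^ (-(k : ℤ)) ≤ δ n := zpow_le_zpow_right₀ (by norm_num) (by omega)
      linarith
  · left; linarith [δ_pos n]

lemma bddAbove_image_calA {φ : ℝ → ℝ} (hφ : Continuous φ) : BddAbove (φ '' calA) :=
  (isCompact_Icc.bddAbove_image hφ.continuousOn).mono (image_mono calA_subset_Icc)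

lemma B₀_mono : Monotone B₀ := fun s t hst =>
  csSup_image_le_csSup_image calA_nonempty
    (fun a ha => min_le_min (monotone_ψ₀ (calA_subset_Icc ha).1 hst)
      (monotone_ψ₁ (calA_subset_Icc ha).2 hst))
    (bddAbove_image_calA (by unfold ψ₀ ψ₁; fun_prop))

lemma B₁_anti : Antitone B₁ := fun s t hst =>
  csSup_image_le_csSup_image calA_nonempty
    (fun a ha => min_le_min (neg_le_neg (monotone_ψ₁ (calA_subset_Icc ha).2 hst))
      (neg_le_neg (monotone_ψ₀ (calA_subset_Icc ha).1 hst)))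
    (bddAbove_image_calA (by unfold ψ₀ ψ₁; fun_prop))

lemma strictMono_residual {lam : ℝ} (hlam : 0 < lam) : StrictMono fun s => lam * s + B₀ s - B₁ s :=
  fun s t hst => by
    have := B₀_mono hst.le
    have := B₁_anti hst.le
    have := mul_lt_mul_of_pos_left hst hlam
    linarith

lemma B₀_B₁_eq_of_crossing {a b s : ℝ} (ha : a ∈ calA) (hb : b ∈ calA)
    (hgap : ∀ c ∈ calA, c ≤ a ∨ b ≤ c) (hs : -1 ≤ s) (hca : ψ₀ a s ≤ ψ₁ a s)
    (hcb : ψ₁ b s ≤ ψ₀ b s) :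
    B₀ s = max (ψ₀ a s) (ψ₁ b s) ∧ B₁ s = max (-ψ₁ a s) (-ψ₀ b s) :=
  ⟨(isGreatest_image_min_of_gap (monotone_flip_ψ₀ (by linarith)) (antitone_flip_ψ₁ hs) ha hb
      hgap hca hcb).csSup_eq,
    (isGreatest_image_min_of_gap (antitone_flip_ψ₁ hs).neg (monotone_flip_ψ₀ (by linarith)).neg
      ha hb hgap (neg_le_neg hca) (neg_le_neg hcb)).csSup_eq⟩

lemma crossing_window {m t : ℝ} (hm : 0 < m) (hm' : m ≤ 1 / 16384) (ht : 84 ≤ t) (ht' : t ≤ 86) :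
    -1 ≤ √2 - t * m ∧
    ψ₀ (2 - √2 + m) (√2 - t * m) ≤ ψ₁ (2 - √2 + m) (√2 - t * m) ∧
    ψ₁ (2 - √2 + 4 * m) (√2 - t * m) ≤ ψ₀ (2 - √2 + 4 * m) (√2 - t * m) := by
  obtain ⟨hr, hr'⟩ := sqrt_two_mem_Icc
  have := Real.sq_sqrt (show (0 : ℝ) ≤ 2 by norm_num)
  have := mul_nonneg hm.le (sub_nonneg.2 ht)
  have := mul_nonneg hm.le (sub_nonneg.2 ht')
  have := mul_nonneg (mul_nonneg hm.le hm.le) (sub_nonneg.2 ht')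
  unfold ψ₀ ψ₁
  refine ⟨?_, ?_, ?_⟩ <;> nlinarith

lemma B₀_B₁_near {n : ℕ} (hn : 6 ≤ n) {t : ℝ} (ht : 84 ≤ t) (ht' : t ≤ 86) :
    B₀ (√2 - t * δ n) =
        max (ψ₀ (2 - √2 + δ n) (√2 - t * δ n)) (ψ₁ (2 - √2 + 4 * δ n) (√2 - t * δ n)) ∧
      B₁ (√2 - t * δ n) =
        max (-ψ₁ (2 - √2 + δ n) (√2 - t * δ n)) (-ψ₀ (2 - √2 + 4 * δ n) (√2 - t * δ n)) :=
  have ⟨hs, hca, hcb⟩ := crossing_window (δ_pos n) (δ_le hn) ht ht'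
  B₀_B₁_eq_of_crossing (self_add_δ_mem_calA n) (self_add_four_mul_δ_mem_calA (by omega))
    (calA_gap n) hs hca hcb

lemma estimates_at_84 {n : ℕ} (hn : 6 ≤ n) :
    0 < μ n * (√2 - 84 * δ n) + B₀ (√2 - 84 * δ n) - B₁ (√2 - 84 * δ n) ∧
    B₀ (√2 - 84 * δ n) ≤ -(3 / 4 * μ n) ∧ 0 ≤ B₁ (√2 - 84 * δ n) := by
  obtain ⟨h₀, h₁⟩ := B₀_B₁_near hn (t := 84) le_rfl (by norm_num)
  have hm := δ_pos n
  have hm' := δ_le hn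
  rw [h₀, h₁, μ]
  generalize δ n = m at *
  obtain ⟨hr, hr'⟩ := sqrt_two_mem_Icc
  have := Real.sq_sqrt (show (0 : ℝ) ≤ 2 by norm_num)
  have := mul_le_mul_of_nonneg_left hm' hm.le
  have := mul_le_mul_of_nonneg_left hr hm.le
  have := mul_le_mul_of_nonneg_left hr' hm.le
  set σ := √2 - 84 * m with hσ
  set a := 2 - √2 + m with ha
  set b := 2 - √2 + 4 * m with hb
  set lam := 2 * (5 * (3 + 2 * √2)) * m with hlam
  have e₁ : -ψ₁ a σ < lam * σ + ψ₁ b σ := by simp only [ψ₁, hσ, ha, hb, hlam]; nlinarith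
  have e₂ : -ψ₀ b σ < lam * σ + ψ₁ b σ := by simp only [ψ₀, ψ₁, hσ, hb, hlam]; nlinarith
  refine ⟨by linarith [max_lt e₁ e₂, le_max_right (ψ₀ a σ) (ψ₁ b σ)], max_le ?_ ?_,
    le_max_of_le_left ?_⟩ <;> simp only [ψ₀, ψ₁, hσ, ha, hb, hlam] <;> nlinarith

lemma estimates_at_86 {n : ℕ} (hn : 6 ≤ n) :
    μ n * (√2 - 86 * δ n) + B₀ (√2 - 86 * δ n) - B₁ (√2 - 86 * δ n) < 0 ∧
    -μ n ≤ B₀ (√2 - 86 * δ n) ∧ B₁ (√2 - 86 * δ n) ≤ 2 / 3 * μ n := by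
  obtain ⟨h₀, h₁⟩ := B₀_B₁_near hn (t := 86) (by norm_num) le_rfl
  have hm := δ_pos n
  have hm' := δ_le hn
  rw [h₀, h₁, μ]
  generalize δ n = m at *
  obtain ⟨hr, hr'⟩ := sqrt_two_mem_Icc
  have := Real.sq_sqrt (show (0 : ℝ) ≤ 2 by norm_num)
  have := mul_le_mul_of_nonneg_left hm' hm.le
  have := mul_le_mul_of_nonneg_left hr hm.le
  have := mul_le_mul_of_nonneg_left hr' hm.le
  set σ := √2 - 86 * m with hσ
  set a := 2 - √2 + m with ha
  set b := 2 - √2 + 4 * m with hb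
  set lam := 2 * (5 * (3 + 2 * √2)) * m with hlam
  have e₁ : ψ₀ a σ < -ψ₁ a σ - lam * σ := by simp only [ψ₀, ψ₁, hσ, ha, hlam]; nlinarith
  have e₂ : ψ₁ b σ < -ψ₁ a σ - lam * σ := by simp only [ψ₁, hσ, ha, hb, hlam]; nlinarith
  refine ⟨by linarith [max_lt e₁ e₂, le_max_left (-ψ₁ a σ) (-ψ₀ b σ)], le_max_of_le_right ?_,
    max_le ?_ ?_⟩ <;> simp only [ψ₀, ψ₁, hσ, ha, hb, hlam] <;> nlinarith

theorem mem_Icc_of_solution {n : ℕ} (hn : 6 ≤ n) {x y : ℝ} (h₀ : μ n * x + Bop 0 x y = 0)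
    (h₁ : μ n * y + Bop 1 x y = 0) : x ∈ Icc (3 / 4) 1 ∧ y ∈ Icc (-(2 / 3)) 0 := by
  rw [Bop_zero_eq] at h₀
  rw [Bop_one_eq] at h₁
  obtain ⟨hΦ₈₄, hB₀₈₄, hB₁₈₄⟩ := estimates_at_84 hn
  obtain ⟨hΦ₈₆, hB₀₈₆, hB₁₈₆⟩ := estimates_at_86 hn
  have hΦ := strictMono_residual (μ_pos n)
  have hs₈₆ : √2 - 86 * δ n < x - y := hΦ.lt_iff_lt.1 (by linarith)
  have hs₈₄ : x - y < √2 - 84 * δ n := hΦ.lt_iff_lt.1 (by linarith)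
  have := B₀_mono hs₈₆.le
  have := B₀_mono hs₈₄.le
  have := B₁_anti hs₈₆.le
  have := B₁_anti hs₈₄.le
  have := μ_pos n
  refine ⟨⟨?_, ?_⟩, ?_, ?_⟩ <;> nlinarith

theorem liminf_along_mu_n (X Y : ℝ → ℝ)
    (hsol : ∀ lam : ℝ, 0 < lam →
      lam * X lam + Bop 0 (X lam) (Y lam) = 0 ∧
      lam * Y lam + Bop 1 (X lam) (Y lam) = 0) :
    1 / Real.sqrt 2 <
      Filter.liminf (fun n : ℕ =>
        X (2 * (5 * (3 + 2 * Real.sqrt 2)) * (4 : ℝ) ^ (-((n : ℤ) + 1)))) Filter.atTop ∧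
    -(1 / Real.sqrt 2) <
      Filter.liminf (fun n : ℕ =>
        Y (2 * (5 * (3 + 2 * Real.sqrt 2)) * (4 : ℝ) ^ (-((n : ℤ) + 1)))) Filter.atTop := by
  have hbounds : ∀ᶠ n in atTop, X (μ n) ∈ Icc (3 / 4) 1 ∧ Y (μ n) ∈ Icc (-(2 / 3)) 0 :=
    (eventually_ge_atTop 6).mono fun n hn =>
      mem_Icc_of_solution hn (hsol _ (μ_pos n)).1 (hsol _ (μ_pos n)).2
  obtain ⟨h₁, h₂⟩ := inv_sqrt_two_mem_Ioo
  exact ⟨h₂.trans_le (le_liminf_of_eventually_mem_Icc (hbounds.mono fun _ h => h.1)),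
    (neg_lt_neg h₁).trans_le (le_liminf_of_eventually_mem_Icc (hbounds.mono fun _ h => h.2))⟩
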